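/- arXiv:1104.0338 — 2 statements merged into one kernel-verified Lean document; each statement's English description precedes it below -/
import Mathlib

section
/- Let F ∈ AEP(b, C) with b > 1 and C > 0, and let Λ(θ) = log ∫ e^{θx} dF(x) be its logarithmic moment-generating function. Then θ^{-b/(b-1)} Λ(θ) → C(b-1)(Cb)^{-b/(b-1)} as θ → ∞. -/
open MeasureTheory Filter Set

/-- Survival function of a measure on ℝ. -/
noncomputable def survival (ν : Measure ℝ) (x : ℝ) : ℝ := (ν (Set.Ioi x)).toReal

/-- F ∈ AEP(b, C): x^{-b} log F̄(x) → -C as x → ∞. -/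
def MemAEP (ν : Measure ℝ) (b C : ℝ) : Prop :=
  Tendsto (fun x : ℝ => Real.log (survival ν x) / x ^ b) atTop (nhds (-C))

/-- Moment-generating function, with value in ℝ≥0∞. -/
noncomputable def mgf' (ν : Measure ℝ) (θ : ℝ) : ENNReal :=
  ∫⁻ x, ENNReal.ofReal (Real.exp (θ * x)) ∂ν

/-- Logarithmic moment-generating function Λ(θ) = log ∫ e^{θx} dν. -/
noncomputable def cgf' (ν : Measure ℝ) (θ : ℝ) : ℝ := Real.log (mgf' ν θ).toReal

/-- Rate function Λ*(x) = sup_{θ ≥ 0} (θx - Λ(θ)). -/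
noncomputable def rateFn (ν : Measure ℝ) (x : ℝ) : ℝ :=
  sSup {y | ∃ θ : ℝ, 0 ≤ θ ∧ y = θ * x - cgf' ν θ}

/-- Rate function with values in ℝ≥0∞, the supremum being restricted to the
effective domain of Λ. -/
noncomputable def rateFnE (ν : Measure ℝ) (x : ℝ) : ENNReal :=
  ⨆ θ : {θ : ℝ // 0 ≤ θ ∧ mgf' ν θ < ⊤}, ENNReal.ofReal (θ * x - cgf' ν θ)

/-!
Both bounds come from the Legendre transform of `c x ^ b`: by Young's inequality
`θ x - c x ^ b ≤ legendreConst b c * θ ^ (b / (b - 1))` for `x ≥ 0`, with equality at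
`x = (θ / (c b)) ^ (1 / (b - 1))`. If `F̄(x) ≥ exp (-c x ^ b)` eventually (`c > C`), the Chernoff
bound `e^{θx} F̄(x) ≤ E e^{θX}` at that maximiser bounds `Λ(θ)` from below. If
`F̄(x) ≤ exp (-c x ^ b)` for `x ≥ M` (`c < C`), cut `(M, ∞)` into unit intervals; Young's inequality
at `θ + 1` instead of `θ` leaves a spare factor `e^{-x}`, so the series is geometric and
`Λ(θ) ≤ legendreConst b c * (θ + 1) ^ (b / (b - 1)) + O(θ)`. Let `c → C` from both sides.
-/

open Topology Real
open scoped ENNReal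

noncomputable def legendreConst (b c : ℝ) : ℝ := c * (b - 1) * (c * b) ^ (-(b / (b - 1)))

section Legendre

variable {b c θ x : ℝ}

lemma legendreConst_nonneg (hb : 1 < b) (hc : 0 ≤ c) : 0 ≤ legendreConst b c := by
  unfold legendreConst
  have : 0 ≤ b - 1 := by linarith
  positivity

lemma continuousAt_legendreConst (hb : 1 < b) (hc : 0 < c) :
    ContinuousAt (legendreConst b) c :=
  (continuousAt_id.mul continuousAt_const).mul
    ((continuousAt_id.mul continuousAt_const).rpow_const (Or.inl (mul_pos hc (by linarith)).ne'))

lemma legendreConst_eq (hb : 1 < b) (hc : 0 < c) :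
    legendreConst b c = (b - 1) / b * (c * b) ^ (-(1 / (b - 1))) := by
  have hb1 : 0 < b - 1 := by linarith
  have hcb : 0 < c * b := by positivity
  have : -(b / (b - 1)) = -(1 / (b - 1)) + -1 := by field_simp; ring
  rw [legendreConst, this, rpow_add hcb, rpow_neg_one]
  field_simp

lemma mul_sub_mul_rpow_le (hb : 1 < b) (hc : 0 < c) (hθ : 0 ≤ θ) (hx : 0 ≤ x) :
    θ * x - c * x ^ b ≤ legendreConst b c * θ ^ (b / (b - 1)) := by
  have hb1 : 0 < b - 1 := by linarith
  have hcb : 0 < c * b := by positivity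
  -- `A` makes the `b`-th power term of Young's inequality exactly `c * x ^ b`.
  set A : ℝ := (c * b) ^ (-(1 / b))
  have hA : 0 < A := by positivity
  have hAb : A ^ b = (c * b)⁻¹ := by
    rw [← rpow_mul hcb.le, show -(1 / b) * b = -1 by field_simp, rpow_neg_one]
  have hAp : A ^ (b / (b - 1)) = (c * b) ^ (-(1 / (b - 1))) := by
    rw [← rpow_mul hcb.le]
    congr 1
    field_simp
  have young := young_inequality_of_nonneg (mul_nonneg hA.le hθ) (div_nonneg hx hA.le)
    ((Real.holderConjugate_iff_eq_conjExponent hb).2 rfl).symm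
  rw [mul_rpow hA.le hθ, div_rpow hx hA.le, hAb, hAp] at young
  have h1 : A * θ * (x / A) = θ * x := by field_simp
  have h2 : x ^ b / (c * b)⁻¹ / b = c * x ^ b := by field_simp
  have h3 : (c * b) ^ (-(1 / (b - 1))) * θ ^ (b / (b - 1)) / (b / (b - 1))
      = legendreConst b c * θ ^ (b / (b - 1)) := by
    rw [legendreConst_eq hb hc]; field_simp
  linarith

lemma mul_sub_mul_rpow_argmax (hb : 1 < b) (hc : 0 < c) (hθ : 0 < θ) :
    θ * (θ / (c * b)) ^ (1 / (b - 1)) - c * ((θ / (c * b)) ^ (1 / (b - 1))) ^ b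
      = legendreConst b c * θ ^ (b / (b - 1)) := by
  have hb1 : 0 < b - 1 := by linarith
  have hcb : 0 < c * b := by positivity
  have hp : b / (b - 1) = 1 + 1 / (b - 1) := by field_simp; ring
  rw [← rpow_mul (by positivity), mul_comm (1 / (b - 1)), ← div_eq_mul_one_div, hp,
    rpow_add (by positivity), rpow_one, div_rpow hθ.le hcb.le, legendreConst_eq hb hc,
    rpow_add hθ, rpow_one, rpow_neg hcb.le]
  field_simp

end Legendre

lemma setLIntegral_Ioi_le_tsum (ν : Measure ℝ) {g : ℝ → ℝ≥0∞} (hg : Monotone g) (M : ℝ) :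
    ∫⁻ x in Ioi M, g x ∂ν ≤ ∑' k : ℕ, g (M + k + 1) * ν (Ioi (M + k)) := by
  have hcover : Ioi M ⊆ ⋃ k : ℕ, Ioc (M + k) (M + k + 1) := by
    intro x hx
    obtain ⟨n, hn⟩ := mem_iUnion.1 ((iUnion_Ioc_add_intCast M).symm ▸ mem_univ x)
    have hn0 : (0 : ℤ) ≤ n := by
      have : ((-1 : ℤ) : ℝ) < n := by push_cast; linarith [hn.2, mem_Ioi.1 hx]
      have : (-1 : ℤ) < n := by exact_mod_cast this
      omega
    lift n to ℕ using hn0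
    exact mem_iUnion.2 ⟨n, by exact_mod_cast hn⟩
  calc ∫⁻ x in Ioi M, g x ∂ν
      ≤ ∫⁻ x in ⋃ k : ℕ, Ioc (M + k) (M + k + 1), g x ∂ν := lintegral_mono_set hcover
    _ ≤ ∑' k : ℕ, ∫⁻ x in Ioc (M + k) (M + k + 1), g x ∂ν := lintegral_iUnion_le _ _
    _ ≤ ∑' k : ℕ, g (M + k + 1) * ν (Ioi (M + k)) := ENNReal.tsum_le_tsum fun k => ?_
  calc ∫⁻ x in Ioc (M + k) (M + k + 1), g x ∂ν
      ≤ ∫⁻ _ in Ioc (M + k) (M + k + 1), g (M + k + 1) ∂ν :=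
        setLIntegral_mono measurable_const fun x hx => hg hx.2
    _ = g (M + k + 1) * ν (Ioc (M + k) (M + k + 1)) := setLIntegral_const _ _
    _ ≤ g (M + k + 1) * ν (Ioi (M + k)) := by gcongr; exact Ioc_subset_Ioi_self

lemma tsum_ofReal_exp_sub_natCast_le (B : ℝ) :
    ∑' k : ℕ, ENNReal.ofReal (exp (B - k)) ≤ 2 * ENNReal.ofReal (exp B) := by
  have hq : ENNReal.ofReal (exp (-1)) ≤ 2⁻¹ := by
    rw [← ENNReal.ofReal_ofNat 2, ← ENNReal.ofReal_inv_of_pos two_pos]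
    exact ENNReal.ofReal_le_ofReal (by linarith [exp_neg_one_lt_half])
  calc ∑' k : ℕ, ENNReal.ofReal (exp (B - k))
      = ∑' k : ℕ, ENNReal.ofReal (exp B) * ENNReal.ofReal (exp (-1)) ^ k := by
        congr 1; ext k
        rw [← ENNReal.ofReal_pow (exp_pos _).le, ← exp_nat_mul,
          ← ENNReal.ofReal_mul (exp_pos _).le, ← exp_add, sub_eq_add_neg, mul_neg_one]
    _ ≤ ∑' k : ℕ, ENNReal.ofReal (exp B) * 2⁻¹ ^ k := by gcongr
    _ = 2 * ENNReal.ofReal (exp B) := by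
        rw [ENNReal.tsum_mul_left, ENNReal.tsum_geometric, ENNReal.one_sub_inv_two, inv_inv,
          mul_comm]

lemma tendsto_add_mul_add_mul_rpow_div_rpow {p : ℝ} (hp : 1 < p) (A B D : ℝ) :
    Tendsto (fun θ : ℝ => (A + B * θ + D * (θ + 1) ^ p) / θ ^ p) atTop (𝓝 D) := by
  have h1 : Tendsto (fun θ : ℝ => θ ^ (-p)) atTop (𝓝 0) := tendsto_rpow_neg_atTop (by linarith)
  have h2 : Tendsto (fun θ : ℝ => θ ^ (-(p - 1))) atTop (𝓝 0) :=
    tendsto_rpow_neg_atTop (by linarith)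
  have h3 : Tendsto (fun θ : ℝ => (1 + θ⁻¹) ^ p) atTop (𝓝 1) := by
    simpa using ((tendsto_const_nhds (x := (1 : ℝ))).add tendsto_inv_atTop_zero).rpow_const
      (p := p) (Or.inr (by linarith))
  have h := ((h1.const_mul A).add (h2.const_mul B)).add (h3.const_mul D)
  rw [mul_zero, mul_zero, add_zero, zero_add, mul_one] at h
  refine h.congr' ?_
  filter_upwards [eventually_gt_atTop 0] with θ hθ
  rw [rpow_neg hθ.le, neg_sub, rpow_sub hθ, rpow_one, show 1 + θ⁻¹ = (θ + 1) / θ by field_simp,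
    div_rpow (by linarith) hθ.le]
  field_simp

lemma tendsto_of_continuousAt_of_eventually_bounds {α : Type*} {l : Filter α} {f : α → ℝ}
    {φ : ℝ → ℝ} {C : ℝ} (hφ : ContinuousAt φ C)
    (hup : ∀ᶠ c in 𝓝[<] C, ∀ a, φ c < a → ∀ᶠ t in l, f t < a)
    (hlow : ∀ᶠ c in 𝓝[>] C, ∀ a, a < φ c → ∀ᶠ t in l, a < f t) :
    Tendsto f l (𝓝 (φ C)) := by
  refine tendsto_order.2 ⟨fun a ha => ?_, fun a ha => ?_⟩
  · obtain ⟨c, hac, hc⟩ :=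
      (((hφ.eventually_const_lt ha).filter_mono nhdsWithin_le_nhds).and hlow).exists
    exact hc a hac
  · obtain ⟨c, hac, hc⟩ :=
      (((hφ.eventually_lt_const ha).filter_mono nhdsWithin_le_nhds).and hup).exists
    exact hc a hac

section Survival

variable {ν : Measure ℝ} {b c C M θ x : ℝ}

lemma ofReal_exp_mul_mul_le_mgf' (hθ : 0 ≤ θ) (x : ℝ) :
    ENNReal.ofReal (exp (θ * x)) * ν (Ioi x) ≤ mgf' ν θ :=
  calc ENNReal.ofReal (exp (θ * x)) * ν (Ioi x)
      = ∫⁻ _ in Ioi x, ENNReal.ofReal (exp (θ * x)) ∂ν := (setLIntegral_const _ _).symm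
    _ ≤ ∫⁻ y in Ioi x, ENNReal.ofReal (exp (θ * y)) ∂ν :=
        setLIntegral_mono (by fun_prop) fun y hy =>
          ENNReal.ofReal_le_ofReal (exp_le_exp.2 (mul_le_mul_of_nonneg_left (le_of_lt hy) hθ))
    _ ≤ mgf' ν θ := setLIntegral_le_lintegral _ _

lemma mul_add_log_survival_le_cgf' [IsFiniteMeasure ν] (hθ : 0 ≤ θ) (hfin : mgf' ν θ ≠ ⊤)
    (hS : 0 < survival ν x) : θ * x + log (survival ν x) ≤ cgf' ν θ := by
  have h : exp (θ * x) * survival ν x ≤ (mgf' ν θ).toReal := by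
    rw [← ENNReal.ofReal_le_iff_le_toReal hfin, ENNReal.ofReal_mul (exp_pos _).le, survival,
      ENNReal.ofReal_toReal (measure_ne_top ν _)]
    exact ofReal_exp_mul_mul_le_mgf' hθ x
  calc θ * x + log (survival ν x) = log (exp (θ * x) * survival ν x) := by
        rw [log_mul (exp_pos _).ne' hS.ne', log_exp]
    _ ≤ cgf' ν θ := log_le_log (by positivity) h

lemma mgf'_le [IsProbabilityMeasure ν] (hb : 1 < b) (hc : 0 < c) (hM : 0 ≤ M)
    (hs : ∀ x, M ≤ x → survival ν x ≤ exp (-(c * x ^ b))) (hθ : 0 ≤ θ) :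
    mgf' ν θ ≤ ENNReal.ofReal
      (3 * exp ((M + 1) * θ + legendreConst b c * (θ + 1) ^ (b / (b - 1)))) := by
  set E := (M + 1) * θ + legendreConst b c * (θ + 1) ^ (b / (b - 1))
  have hL : 0 ≤ legendreConst b c * (θ + 1) ^ (b / (b - 1)) :=
    mul_nonneg (legendreConst_nonneg hb hc.le) (by positivity)
  have hg : Monotone fun x => ENNReal.ofReal (exp (θ * x)) := fun x y hxy =>
    ENNReal.ofReal_le_ofReal (exp_le_exp.2 (mul_le_mul_of_nonneg_left hxy hθ))
  have hbody : ∫⁻ x in Iic M, ENNReal.ofReal (exp (θ * x)) ∂ν ≤ ENNReal.ofReal (exp E) :=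
    calc ∫⁻ x in Iic M, ENNReal.ofReal (exp (θ * x)) ∂ν
        ≤ ∫⁻ _ in Iic M, ENNReal.ofReal (exp E) ∂ν :=
          setLIntegral_mono measurable_const fun x hx =>
            ENNReal.ofReal_le_ofReal (exp_le_exp.2 (by nlinarith [mem_Iic.1 hx]))
      _ = ENNReal.ofReal (exp E) * ν (Iic M) := setLIntegral_const _ _
      _ ≤ ENNReal.ofReal (exp E) := mul_le_of_le_one_right' prob_le_one
  have hstep (k : ℕ) : ENNReal.ofReal (exp (θ * (M + k + 1))) * ν (Ioi (M + k))
      ≤ ENNReal.ofReal (exp (E - k)) := by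
    have hy : 0 ≤ M + k := by positivity
    have hyoung := mul_sub_mul_rpow_le hb hc (by linarith : 0 ≤ θ + 1) hy
    rw [← ENNReal.ofReal_toReal (measure_ne_top ν (Ioi _)), ← survival,
      ← ENNReal.ofReal_mul (exp_pos _).le]
    refine ENNReal.ofReal_le_ofReal
      ((mul_le_mul_of_nonneg_left (hs _ (by simp)) (exp_pos _).le).trans ?_)
    rw [← exp_add]
    exact exp_le_exp.2 (by nlinarith)
  have htail : ∫⁻ x in Ioi M, ENNReal.ofReal (exp (θ * x)) ∂ν ≤ 2 * ENNReal.ofReal (exp E) :=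
    (setLIntegral_Ioi_le_tsum ν hg M).trans
      ((ENNReal.tsum_le_tsum hstep).trans (tsum_ofReal_exp_sub_natCast_le E))
  calc mgf' ν θ
      = ∫⁻ x in Iic M, ENNReal.ofReal (exp (θ * x)) ∂ν
        + ∫⁻ x in Ioi M, ENNReal.ofReal (exp (θ * x)) ∂ν := by
        rw [mgf', ← lintegral_add_compl _ measurableSet_Iic, compl_Iic]
    _ ≤ ENNReal.ofReal (exp E) + 2 * ENNReal.ofReal (exp E) := add_le_add hbody htail
    _ = ENNReal.ofReal (3 * exp E) := by
        rw [ENNReal.ofReal_mul (by norm_num), ENNReal.ofReal_ofNat]; ring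

lemma cgf'_le [IsProbabilityMeasure ν] (hb : 1 < b) (hc : 0 < c) (hM : 0 ≤ M)
    (hs : ∀ x, M ≤ x → survival ν x ≤ exp (-(c * x ^ b))) (hθ : 0 ≤ θ) :
    cgf' ν θ ≤ log 3 + (M + 1) * θ + legendreConst b c * (θ + 1) ^ (b / (b - 1)) := by
  set E := (M + 1) * θ + legendreConst b c * (θ + 1) ^ (b / (b - 1))
  have hE : 0 ≤ E := add_nonneg (by positivity)
    (mul_nonneg (legendreConst_nonneg hb hc.le) (by positivity))
  have h := ENNReal.toReal_le_of_le_ofReal (by positivity) (mgf'_le hb hc hM hs hθ)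
  rcases ENNReal.toReal_nonneg.eq_or_lt with h0 | hpos
  · rw [cgf', ← h0, log_zero]
    linarith [log_nonneg (by norm_num : (1 : ℝ) ≤ 3)]
  · calc cgf' ν θ ≤ log (3 * exp E) := log_le_log hpos h
      _ = log 3 + E := by rw [log_mul (by norm_num) (exp_pos _).ne', log_exp]
      _ = _ := by ring

namespace MemAEP

lemma exists_forall_survival_le (h : MemAEP ν b C) (hc : c < C) :
    ∃ M, 0 ≤ M ∧ ∀ x, M ≤ x → survival ν x ≤ exp (-(c * x ^ b)) := by
  obtain ⟨M, hM⟩ := eventually_atTop.1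
    ((h.eventually_lt_const (neg_lt_neg hc)).and (eventually_gt_atTop 0))
  refine ⟨max M 0, le_max_right _ _, fun x hx => ?_⟩
  obtain ⟨hlog, hx0⟩ := hM x ((le_max_left _ _).trans hx)
  rw [div_lt_iff₀ (rpow_pos_of_pos hx0 b)] at hlog
  exact (le_exp_log _).trans (exp_le_exp.2 (by linarith))

lemma eventually_exp_le_survival (h : MemAEP ν b C) (hC : 0 < C) (hc : C < c) :
    ∀ᶠ x in atTop, exp (-(c * x ^ b)) ≤ survival ν x := by
  filter_upwards [h.eventually_const_lt (neg_lt_neg hc), h.eventually_lt_const (neg_neg_of_pos hC),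
    eventually_gt_atTop 0] with x hlow hneg hx
  have hS : 0 < survival ν x := by
    refine ENNReal.toReal_nonneg.lt_of_ne fun h0 => ?_
    rw [survival, ← h0, log_zero, zero_div] at hneg
    exact lt_irrefl _ hneg
  rw [lt_div_iff₀ (rpow_pos_of_pos hx b)] at hlow
  rw [← exp_log hS]
  exact exp_le_exp.2 (by linarith)

lemma mgf'_lt_top [IsProbabilityMeasure ν] (h : MemAEP ν b C) (hb : 1 < b) (hC : 0 < C)
    (hθ : 0 ≤ θ) : mgf' ν θ < ⊤ := by
  obtain ⟨M, hM, hs⟩ := h.exists_forall_survival_le (half_lt_self hC)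
  exact (mgf'_le hb (half_pos hC) hM hs hθ).trans_lt ENNReal.ofReal_lt_top

lemma eventually_cgf'_div_rpow_lt [IsProbabilityMeasure ν] (h : MemAEP ν b C) (hb : 1 < b)
    (hc : 0 < c) (hcC : c < C) {a : ℝ} (ha : legendreConst b c < a) :
    ∀ᶠ θ in atTop, cgf' ν θ / θ ^ (b / (b - 1)) < a := by
  obtain ⟨M, hM, hs⟩ := h.exists_forall_survival_le hcC
  have hp : 1 < b / (b - 1) := by rw [lt_div_iff₀ (by linarith)]; linarith
  filter_upwards [(tendsto_add_mul_add_mul_rpow_div_rpow hp (log 3) (M + 1)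
    (legendreConst b c)).eventually_lt_const ha, eventually_gt_atTop 0] with θ hlt hθ
  exact (div_le_div_of_nonneg_right (cgf'_le hb hc hM hs hθ.le) (by positivity)).trans_lt hlt

lemma eventually_lt_cgf'_div_rpow [IsProbabilityMeasure ν] (h : MemAEP ν b C) (hb : 1 < b)
    (hC : 0 < C) (hcC : C < c) {a : ℝ} (ha : a < legendreConst b c) :
    ∀ᶠ θ in atTop, a < cgf' ν θ / θ ^ (b / (b - 1)) := by
  have hc : 0 < c := hC.trans hcC
  have hmax : Tendsto (fun θ : ℝ => (θ / (c * b)) ^ (1 / (b - 1))) atTop atTop :=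
    (tendsto_rpow_atTop (one_div_pos.2 (by linarith))).comp
      (tendsto_id.atTop_div_const (by positivity))
  filter_upwards [hmax.eventually (h.eventually_exp_le_survival hC hcC),
    eventually_gt_atTop 0] with θ hS hθ
  rw [lt_div_iff₀ (by positivity)]
  set x := (θ / (c * b)) ^ (1 / (b - 1))
  calc a * θ ^ (b / (b - 1)) < legendreConst b c * θ ^ (b / (b - 1)) := by gcongr
    _ = θ * x - c * x ^ b := (mul_sub_mul_rpow_argmax hb hc hθ).symm
    _ ≤ θ * x + log (survival ν x) := by
        have := log_le_log (exp_pos _) hS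
        rw [log_exp] at this
        linarith
    _ ≤ cgf' ν θ := mul_add_log_survival_le_cgf' hθ.le (h.mgf'_lt_top hb hC hθ.le).ne
        ((exp_pos _).trans_le hS)

end MemAEP

end Survival

/-- growth of the log-MGF of an AEP(b,C) distribution, b > 1. -/
theorem stmt2 (ν : Measure ℝ) (hν : IsProbabilityMeasure ν)
    (b C : ℝ) (hb : 1 < b) (hC : 0 < C) (hAEP : MemAEP ν b C) :
    Tendsto (fun θ : ℝ => cgf' ν θ / θ ^ (b / (b - 1))) atTop
      (nhds (C * (b - 1) * (C * b) ^ (-(b / (b - 1))))) := by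
  change Tendsto _ atTop (𝓝 (legendreConst b C))
  refine tendsto_of_continuousAt_of_eventually_bounds (continuousAt_legendreConst hb hC) ?_ ?_
  · filter_upwards [Ioo_mem_nhdsLT hC] with c hc
    exact fun a => hAEP.eventually_cgf'_div_rpow_lt hb hc.1 hc.2
  · filter_upwards [self_mem_nhdsWithin] with c hc
    exact fun a => hAEP.eventually_lt_cgf'_div_rpow hb hC hc
end

section
/- In the setting of site percolation on ℤ^d restricted to the box V_m, let N_m(k) denote the number of open clusters of size k within V_m. Then for all k, ℓ ≥ 1: |Cov(N_m(k), N_m(ℓ))| ≤ 3^{d+1} (k + ℓ)^d E[N_m(k ∨ ℓ)]. In particular, Var(N_m(k)) ≤ 6^{d+1} k^d E[N_m(k)]. -/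
open MeasureTheory Filter Set
open scoped Classical

namespace Perc

abbrev Vertex (d : ℕ) := Fin d → ℤ

/-- Nearest-neighbor adjacency on ℤ^d. -/
def adj {d : ℕ} (v w : Vertex d) : Prop := (∑ i, (v i - w i).natAbs) = 1

/-- Adjacency between open vertices in configuration ω. -/
def openAdj {d : ℕ} (ω : Vertex d → Bool) (v w : Vertex d) : Prop :=
  adj v w ∧ ω v = true ∧ ω w = true

/-- Open cluster at v (empty if v is closed). -/
def cluster {d : ℕ} (ω : Vertex d → Bool) (v : Vertex d) : Set (Vertex d) :=
  {w | ω v = true ∧ Relation.ReflTransGen (openAdj ω) v w}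

/-- Event: the open cluster at v contains at least k vertices. -/
def clusterGE {d : ℕ} (v : Vertex d) (k : ℕ) : Set (Vertex d → Bool) :=
  {ω | ∃ T : Finset (Vertex d), ↑T ⊆ cluster ω v ∧ T.card = k}

/-- Event: the open cluster at v contains at least x vertices (real threshold). -/
def clusterGEr {d : ℕ} (v : Vertex d) (x : ℝ) : Set (Vertex d → Bool) :=
  {ω | ∃ T : Finset (Vertex d), ↑T ⊆ cluster ω v ∧ x ≤ (T.card : ℝ)}

/-- Event: the open cluster at v has exactly k vertices (and is finite). -/
def clusterEq {d : ℕ} (v : Vertex d) (k : ℕ) : Set (Vertex d → Bool) :=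
  {ω | (cluster ω v).Finite ∧ (cluster ω v).ncard = k}

/-- Event: the open cluster at v is finite of size at least k. -/
def clusterFinGE {d : ℕ} (v : Vertex d) (k : ℕ) : Set (Vertex d → Bool) :=
  {ω | (cluster ω v).Finite ∧ k ≤ (cluster ω v).ncard}

/-- μ is (possibly inhomogeneous) Bernoulli site percolation with parameters q. -/
def IsSitePerc {d : ℕ} (μ : Measure (Vertex d → Bool)) (q : Vertex d → ℝ) : Prop :=
  IsProbabilityMeasure μ ∧
  ∀ (s : Finset (Vertex d)) (f : Vertex d → Bool),
    μ {ω | ∀ v ∈ s, ω v = f v}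
      = ∏ v ∈ s, (if f v then ENNReal.ofReal (q v) else ENNReal.ofReal (1 - q v))

/-- μ is Bernoulli site percolation with parameter p. -/
def IsBernoulliPerc {d : ℕ} (μ : Measure (Vertex d → Bool)) (p : ℝ) : Prop :=
  IsSitePerc μ (fun _ => p)

def origin (d : ℕ) : Vertex d := fun _ => 0

/-- Critical probability for site percolation on ℤ^d. -/
noncomputable def pc (d : ℕ) : ℝ :=
  sSup {p : ℝ | 0 ≤ p ∧ p ≤ 1 ∧ ∀ μ : Measure (Vertex d → Bool),
    IsBernoulliPerc μ p → μ {ω | (cluster ω (origin d)).Infinite} = 0}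

/-- The box V_m = {1, ..., m}^d. -/
def box (d m : ℕ) : Set (Vertex d) := {v | ∀ i, 1 ≤ v i ∧ v i ≤ (m : ℤ)}

/-- Adjacency between open vertices within a region B. -/
def openAdjIn {d : ℕ} (B : Set (Vertex d)) (ω : Vertex d → Bool) (v w : Vertex d) : Prop :=
  adj v w ∧ v ∈ B ∧ w ∈ B ∧ ω v = true ∧ ω w = true

/-- Open cluster at v within the region B. -/
def clusterIn {d : ℕ} (B : Set (Vertex d)) (ω : Vertex d → Bool) (v : Vertex d) :
    Set (Vertex d) :=
  {w | v ∈ B ∧ ω v = true ∧ Relation.ReflTransGen (openAdjIn B ω) v w}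

/-- S_m: the size of the largest open cluster within the box V_m. -/
noncomputable def largest (d m : ℕ) (ω : Vertex d → Bool) : ℕ :=
  sSup {n : ℕ | ∃ v : Vertex d, n = (clusterIn (box d m) ω v).ncard}

/-- N_m(k): the number of open clusters of size exactly k within the box V_m. -/
noncomputable def Nm (d m k : ℕ) (ω : Vertex d → Bool) : ℝ :=
  ∑ v ∈ Fintype.piFinset (fun _ : Fin d => Finset.Icc (1 : ℤ) (m : ℤ)),
    if (clusterIn (box d m) ω v).ncard = k then (1 : ℝ) / k else 0

/-- ℓ^∞ distance between vertices. -/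
def linfDist {d : ℕ} (v w : Vertex d) : ℕ :=
  Finset.univ.sup fun i => (v i - w i).natAbs

end Perc

/-!
Write `N_m(k) = ∑_v X^v(k)` with `X^v(k) = k⁻¹ 1{|C_m(v)| = k}` (`clusterWeight`). An open
path from `v` moves by at most one in `ℓ^∞` per step, so a cluster of size `k` lies within
`ℓ^∞`-distance `k - 1` of `v`; hence `X^v(k)` is determined by the configuration on the
`ℓ^∞`-ball of radius `k` around `v` (the cluster and its outer boundary). For Bernoulli
percolation, `X^v(k)` and `X^w(ℓ)` are thus independent once `‖v - w‖_∞ > k + ℓ`, and in any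
case `|Cov(X^v(k), X^w(ℓ))| ≤ ℓ⁻¹ E[X^v(k)]` because `0 ≤ X^w(ℓ) ≤ ℓ⁻¹`. Expanding the
covariance of the sums, each `v` has at most `(2(k + ℓ) + 1)^d ≤ (3(k + ℓ))^d` partners `w`
that contribute.
-/

open ProbabilityTheory

section RestrictBool

variable {ι β : Type*} {X : (ι → Bool) → β} {s : Finset ι}

lemma DependsOn.exists_comp_restrict (hX : DependsOn X s) :
    ∃ g : (s → Bool) → β, X = g ∘ s.restrict :=
  have : Nonempty β := ⟨X fun _ => false⟩
  dependsOn_iff_exists_comp.1 hX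

lemma DependsOn.measurable_of_finset [MeasurableSpace β] (hX : DependsOn X s) : Measurable X := by
  obtain ⟨g, rfl⟩ := hX.exists_comp_restrict
  exact (measurable_of_countable g).comp (Finset.measurable_restrict s)

lemma Finset.restrict_preimage_singleton (g : s → Bool) :
    (s.restrict : (ι → Bool) → s → Bool) ⁻¹' {g}
      = {x | ∀ i ∈ s, x i = if h : i ∈ s then g ⟨i, h⟩ else false} := by
  ext x
  simp only [Set.mem_preimage, Set.mem_singleton_iff, funext_iff, Finset.restrict, Subtype.forall]
  exact forall₂_congr fun i hi => by rw [dif_pos hi]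

end RestrictBool

lemma ProbabilityTheory.abs_covariance_le_mul_integral {Ω : Type*} [MeasurableSpace Ω]
    {μ : Measure Ω} [IsProbabilityMeasure μ] {X Y : Ω → ℝ} {c : ℝ} (hX : MemLp X 2 μ)
    (hY : MemLp Y 2 μ) (hX0 : 0 ≤ X) (hY0 : 0 ≤ Y) (hYc : ∀ ω, Y ω ≤ c) :
    |cov[X, Y; μ]| ≤ c * μ[X] := by
  rw [covariance_eq_sub hX hY]
  have hXY : 0 ≤ μ[X * Y] := integral_nonneg fun ω => mul_nonneg (hX0 ω) (hY0 ω)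
  have hXY_le : μ[X * Y] ≤ c * μ[X] := by
    rw [← integral_const_mul]
    refine integral_mono (hX.integrable_mul hY) ((hX.integrable one_le_two).const_mul c)
      fun ω => ?_
    simpa [mul_comm] using mul_le_mul_of_nonneg_left (hYc ω) (hX0 ω)
  have hX_nonneg : 0 ≤ μ[X] := integral_nonneg hX0
  have hY_nonneg : 0 ≤ μ[Y] := integral_nonneg hY0
  have hY_le : μ[Y] ≤ c := by
    simpa using integral_mono (hY.integrable one_le_two) (integrable_const c) hYc
  exact abs_sub_le_iff.2 ⟨by nlinarith, by nlinarith⟩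

namespace Perc

variable {d : ℕ}

lemma linfDist_le_iff {v w : Vertex d} {r : ℕ} :
    linfDist v w ≤ r ↔ ∀ i, (v i - w i).natAbs ≤ r := by
  simp [linfDist, Finset.sup_le_iff]

@[simp]
lemma linfDist_self (v : Vertex d) : linfDist v v = 0 := by
  simp [linfDist]

lemma linfDist_comm (v w : Vertex d) : linfDist v w = linfDist w v := by
  simp only [linfDist, ← Int.natAbs_neg (v _ - w _), neg_sub]

lemma natAbs_sub_le_linfDist (v w : Vertex d) (i : Fin d) : (v i - w i).natAbs ≤ linfDist v w :=
  linfDist_le_iff.1 le_rfl i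

lemma linfDist_triangle (u v w : Vertex d) : linfDist u w ≤ linfDist u v + linfDist v w := by
  refine linfDist_le_iff.2 fun i => ?_
  have := natAbs_sub_le_linfDist u v i
  have := natAbs_sub_le_linfDist v w i
  omega

lemma adj.linfDist_le_one {v w : Vertex d} (h : adj v w) : linfDist v w ≤ 1 :=
  linfDist_le_iff.2 fun i => h ▸
    Finset.single_le_sum (f := fun j => (v j - w j).natAbs) (fun _ _ => Nat.zero_le _)
      (Finset.mem_univ i)

noncomputable def linfBall (v : Vertex d) (r : ℕ) : Finset (Vertex d) :=
  Fintype.piFinset fun i => Finset.Icc (v i - r) (v i + r)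

lemma mem_linfBall {v w : Vertex d} {r : ℕ} : w ∈ linfBall v r ↔ linfDist v w ≤ r := by
  rw [linfBall, Fintype.mem_piFinset, linfDist_le_iff]
  refine forall_congr' fun i => ?_
  rw [Finset.mem_Icc]
  omega

lemma card_linfBall (v : Vertex d) (r : ℕ) : (linfBall v r).card = (2 * r + 1) ^ d := by
  have hIcc : ∀ i, (Finset.Icc (v i - r) (v i + r)).card = 2 * r + 1 := fun i => by
    rw [Int.card_Icc]; omega
  simp [linfBall, hIcc]

lemma disjoint_linfBall {v w : Vertex d} {k l : ℕ} (h : k + l < linfDist v w) :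
    Disjoint (linfBall v k) (linfBall w l) := by
  refine Finset.disjoint_left.2 fun x hv hw => ?_
  rw [mem_linfBall] at hv hw
  have := linfDist_triangle v x w
  rw [linfDist_comm x w] at this
  omega

variable {B : Set (Vertex d)} {ω ω' : Vertex d → Bool} {v w : Vertex d}

lemma eq_true_of_mem_clusterIn (h : w ∈ clusterIn B ω v) : ω w = true := by
  obtain ⟨-, hv, hr⟩ := h
  cases hr with
  | refl => exact hv
  | tail _ hbc => exact hbc.2.2.2.2

lemma exists_mem_clusterIn_linfDist_eq (hw : w ∈ clusterIn B ω v) {j : ℕ}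
    (hj : j ≤ linfDist v w) : ∃ x ∈ clusterIn B ω v, linfDist v x = j := by
  obtain ⟨hvB, hv, hr⟩ := hw
  induction hr generalizing j with
  | refl => exact ⟨v, ⟨hvB, hv, .refl⟩, by simp_all⟩
  | @tail b c hvb hbc ih =>
    by_cases hjb : j ≤ linfDist v b
    · exact ih hjb
    · have := linfDist_triangle v b c
      have := hbc.1.linfDist_le_one
      exact ⟨c, ⟨hvB, hv, hvb.tail hbc⟩, by omega⟩

lemma linfDist_lt_ncard_clusterIn (hfin : (clusterIn B ω v).Finite) (hw : w ∈ clusterIn B ω v) :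
    linfDist v w < (clusterIn B ω v).ncard := by
  have hrange : (↑(Finset.range (linfDist v w + 1)) : Set ℕ) ⊆ linfDist v '' clusterIn B ω v :=
    fun j hj => exists_mem_clusterIn_linfDist_eq hw (Nat.lt_succ_iff.1 (Finset.mem_range.1 hj))
  calc linfDist v w < (↑(Finset.range (linfDist v w + 1)) : Set ℕ).ncard := by simp
    _ ≤ (linfDist v '' clusterIn B ω v).ncard := Set.ncard_le_ncard hrange (hfin.image _)
    _ ≤ (clusterIn B ω v).ncard := Set.ncard_image_le hfin

lemma clusterIn_eq_of_eqOn {k : ℕ} (hk : 1 ≤ k) (hcard : (clusterIn B ω v).ncard = k)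
    (hagree : Set.EqOn ω ω' (linfBall v k)) : clusterIn B ω' v = clusterIn B ω v := by
  have hfin : (clusterIn B ω v).Finite := Set.finite_of_ncard_pos (by omega)
  have hnear : ∀ w ∈ clusterIn B ω v, linfDist v w < k :=
    fun w hw => hcard ▸ linfDist_lt_ncard_clusterIn hfin hw
  obtain ⟨-, hvB, hv, -⟩ := Set.nonempty_of_ncard_ne_zero (by omega : (clusterIn B ω v).ncard ≠ 0)
  have hv' : ω' v = true := by rw [← hagree (mem_linfBall.2 (by simp))]; exact hv
  apply Set.Subset.antisymm
  · rintro w ⟨-, -, hr⟩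
    induction hr with
    | refl => exact ⟨hvB, hv, .refl⟩
    | @tail b c _ hbc hb =>
      have := linfDist_triangle v b c
      have := hbc.1.linfDist_le_one
      have hc : ω c = true := by
        rw [hagree (mem_linfBall.2 (by linarith [hnear b hb]))]; exact hbc.2.2.2.2
      exact ⟨hvB, hv, hb.2.2.tail ⟨hbc.1, hbc.2.1, hbc.2.2.1, eq_true_of_mem_clusterIn hb, hc⟩⟩
  · rintro w ⟨-, -, hr⟩
    induction hr with
    | refl => exact ⟨hvB, hv', .refl⟩
    | @tail b c hvb hbc hb =>
      have hb' : ω' b = true := by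
        rw [← hagree (mem_linfBall.2 (hnear b ⟨hvB, hv, hvb⟩).le)]; exact hbc.2.2.2.1
      have hc' : ω' c = true := by
        rw [← hagree (mem_linfBall.2 (hnear c ⟨hvB, hv, hvb.tail hbc⟩).le)]; exact hbc.2.2.2.2
      exact ⟨hvB, hv', hb.2.2.tail ⟨hbc.1, hbc.2.1, hbc.2.2.1, hb', hc'⟩⟩

lemma ncard_clusterIn_eq_iff_of_eqOn {k : ℕ} (hk : 1 ≤ k)
    (hagree : Set.EqOn ω ω' (linfBall v k)) :
    (clusterIn B ω v).ncard = k ↔ (clusterIn B ω' v).ncard = k :=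
  ⟨fun h => clusterIn_eq_of_eqOn hk h hagree ▸ h,
    fun h => clusterIn_eq_of_eqOn hk h hagree.symm ▸ h⟩

section Independence

variable {μ : Measure (Vertex d → Bool)} {q : Vertex d → ℝ}

lemma IsSitePerc.measure_inter_cylinder (hμ : IsSitePerc μ q) {s t : Finset (Vertex d)}
    (hst : Disjoint s t) (f g : Vertex d → Bool) :
    μ ({ω | ∀ v ∈ s, ω v = f v} ∩ {ω | ∀ v ∈ t, ω v = g v})
      = μ {ω | ∀ v ∈ s, ω v = f v} * μ {ω | ∀ v ∈ t, ω v = g v} := by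
  have hglue : {ω | ∀ v ∈ s, ω v = f v} ∩ {ω | ∀ v ∈ t, ω v = g v}
      = {ω : Vertex d → Bool | ∀ v ∈ s ∪ t, ω v = if v ∈ s then f v else g v} := by
    ext ω
    simp only [Set.mem_inter_iff, Set.mem_ofPred_eq, Finset.mem_union]
    refine ⟨fun ⟨hf, hg⟩ v hv => ?_, fun h => ⟨fun v hv => ?_, fun v hv => ?_⟩⟩
    · rcases hv with hv | hv
      · rw [if_pos hv, hf v hv]
      · rw [if_neg (Finset.disjoint_right.1 hst hv), hg v hv]
    · simpa [hv] using h v (.inl hv)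
    · simpa [Finset.disjoint_right.1 hst hv] using h v (.inr hv)
  rw [hglue, hμ.2, hμ.2, hμ.2, Finset.prod_union hst]
  congr 1 <;> refine Finset.prod_congr rfl fun v hv => ?_
  · rw [if_pos hv]
  · rw [if_neg (Finset.disjoint_right.1 hst hv)]

lemma IsSitePerc.indepFun_restrict (hμ : IsSitePerc μ q) {s t : Finset (Vertex d)}
    (hst : Disjoint s t) : IndepFun s.restrict t.restrict μ := by
  have := hμ.1
  have hs := Finset.measurable_restrict (X := fun _ : Vertex d => Bool) s
  have ht := Finset.measurable_restrict (X := fun _ : Vertex d => Bool) t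
  rw [indepFun_iff_map_prod_eq_prod_map_map hs.aemeasurable ht.aemeasurable]
  refine Measure.ext_of_singleton fun ⟨g, h⟩ => ?_
  rw [← Set.singleton_prod_singleton, Measure.prod_prod,
    Measure.map_apply (hs.prodMk ht) (.of_discrete),
    Measure.map_apply hs (measurableSet_singleton _),
    Measure.map_apply ht (measurableSet_singleton _),
    Set.mk_preimage_prod, Finset.restrict_preimage_singleton, Finset.restrict_preimage_singleton,
    hμ.measure_inter_cylinder hst]

lemma IsSitePerc.indepFun_of_dependsOn (hμ : IsSitePerc μ q) {β γ : Type*} [MeasurableSpace β]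
    [MeasurableSpace γ] {X : (Vertex d → Bool) → β} {Y : (Vertex d → Bool) → γ}
    {s t : Finset (Vertex d)} (hX : DependsOn X s) (hY : DependsOn Y t) (hst : Disjoint s t) :
    IndepFun X Y μ := by
  obtain ⟨g, rfl⟩ := hX.exists_comp_restrict
  obtain ⟨h, rfl⟩ := hY.exists_comp_restrict
  exact (hμ.indepFun_restrict hst).comp (measurable_of_countable g) (measurable_of_countable h)

end Independence

section ClusterWeight

variable {μ : Measure (Vertex d → Bool)} {q : Vertex d → ℝ} {B : Set (Vertex d)}
  {k l : ℕ} {v w : Vertex d}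

noncomputable def clusterWeight (B : Set (Vertex d)) (k : ℕ) (v : Vertex d)
    (ω : Vertex d → Bool) : ℝ :=
  if (clusterIn B ω v).ncard = k then (1 : ℝ) / k else 0

lemma clusterWeight_nonneg : 0 ≤ clusterWeight B k v := fun ω => by
  unfold clusterWeight; split_ifs <;> positivity

lemma clusterWeight_le (ω : Vertex d → Bool) : clusterWeight B k v ω ≤ (1 : ℝ) / k := by
  unfold clusterWeight; split_ifs
  exacts [le_rfl, by positivity]

lemma dependsOn_clusterWeight (hk : 1 ≤ k) :
    DependsOn (clusterWeight B k v) (linfBall v k : Set (Vertex d)) := fun ω ω' h => by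
  simp only [clusterWeight, ncard_clusterIn_eq_iff_of_eqOn hk h]

lemma memLp_clusterWeight [IsFiniteMeasure μ] (hk : 1 ≤ k) (p : ENNReal) :
    MemLp (clusterWeight B k v) p μ :=
  .of_bound (dependsOn_clusterWeight hk).measurable_of_finset.aestronglyMeasurable ((1 : ℝ) / k)
    (ae_of_all _ fun ω => by
      rw [Real.norm_of_nonneg (clusterWeight_nonneg ω)]; exact clusterWeight_le ω)

lemma abs_covariance_clusterWeight_le [IsProbabilityMeasure μ] (hk : 1 ≤ k) (hl : 1 ≤ l) :
    |cov[clusterWeight B k v, clusterWeight B l w; μ]| ≤ (1 : ℝ) / l * μ[clusterWeight B k v] :=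
  abs_covariance_le_mul_integral (memLp_clusterWeight hk 2) (memLp_clusterWeight hl 2)
    clusterWeight_nonneg clusterWeight_nonneg clusterWeight_le

lemma IsSitePerc.covariance_clusterWeight_eq_zero (hμ : IsSitePerc μ q) (hk : 1 ≤ k)
    (hl : 1 ≤ l) (hvw : k + l < linfDist v w) :
    cov[clusterWeight B k v, clusterWeight B l w; μ] = 0 :=
  have := hμ.1
  (hμ.indepFun_of_dependsOn (dependsOn_clusterWeight hk) (dependsOn_clusterWeight hl)
    (disjoint_linfBall hvw)).covariance_eq_zero (memLp_clusterWeight hk 2)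
    (memLp_clusterWeight hl 2)

lemma IsSitePerc.abs_covariance_sum_clusterWeight_le (hμ : IsSitePerc μ q)
    (F : Finset (Vertex d)) (hk : 1 ≤ k) (hl : 1 ≤ l) :
    |cov[∑ v ∈ F, clusterWeight B k v, ∑ w ∈ F, clusterWeight B l w; μ]|
      ≤ (2 * (k + l) + 1 : ℝ) ^ d / l * ∑ v ∈ F, μ[clusterWeight B k v] := by
  have := hμ.1
  rw [covariance_sum_sum' (fun v _ => memLp_clusterWeight hk 2)
    (fun w _ => memLp_clusterWeight hl 2), Finset.mul_sum]
  refine (Finset.abs_sum_le_sum_abs _ _).trans (Finset.sum_le_sum fun v _ => ?_)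
  set near := F.filter fun w => linfDist v w ≤ k + l
  have hnear : (near.card : ℝ) ≤ (2 * (k + l) + 1 : ℝ) ^ d := by
    have := Finset.card_le_card (s := near) (t := linfBall v (k + l))
      fun w hw => mem_linfBall.2 (Finset.mem_filter.1 hw).2
    rw [card_linfBall] at this
    exact_mod_cast this
  have hEv : 0 ≤ μ[clusterWeight B k v] := integral_nonneg clusterWeight_nonneg
  calc |∑ w ∈ F, cov[clusterWeight B k v, clusterWeight B l w; μ]|
      = |∑ w ∈ near, cov[clusterWeight B k v, clusterWeight B l w; μ]| := by
        rw [Finset.sum_filter_of_ne fun w _ h => not_lt.1 fun hfar =>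
          h (hμ.covariance_clusterWeight_eq_zero hk hl hfar)]
    _ ≤ ∑ w ∈ near, (1 : ℝ) / l * μ[clusterWeight B k v] :=
        (Finset.abs_sum_le_sum_abs _ _).trans
          (Finset.sum_le_sum fun w _ => abs_covariance_clusterWeight_le hk hl)
    _ = near.card * (1 / l * μ[clusterWeight B k v]) := by
        rw [Finset.sum_const, nsmul_eq_mul]
    _ ≤ (2 * (k + l) + 1 : ℝ) ^ d * (1 / l * μ[clusterWeight B k v]) := by gcongr
    _ = (2 * (k + l) + 1 : ℝ) ^ d / l * μ[clusterWeight B k v] := by ring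

end ClusterWeight

section ClusterCount

variable {μ : Measure (Vertex d → Bool)} {q : Vertex d → ℝ} {m k l : ℕ}

lemma Nm_eq_sum_clusterWeight (d m k : ℕ) :
    Nm d m k = ∑ v ∈ Fintype.piFinset (fun _ : Fin d => Finset.Icc (1 : ℤ) m),
      clusterWeight (box d m) k v := by
  ext ω
  rw [Finset.sum_apply]
  rfl

lemma Nm_nonneg (ω : Vertex d → Bool) : 0 ≤ Nm d m k ω :=
  Finset.sum_nonneg fun _ _ => clusterWeight_nonneg ω

lemma memLp_Nm [IsFiniteMeasure μ] (hk : 1 ≤ k) : MemLp (Nm d m k) 2 μ := by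
  rw [Nm_eq_sum_clusterWeight]
  exact memLp_finsetSum' _ fun v _ => memLp_clusterWeight hk 2

lemma two_mul_add_add_one_pow_div_le (d : ℕ) (hk : 1 ≤ k) (hl : 1 ≤ l) :
    (2 * (k + l) + 1 : ℝ) ^ d / l ≤ 3 ^ (d + 1) * ((k : ℝ) + l) ^ d := by
  have hk' : (1 : ℝ) ≤ k := by exact_mod_cast hk
  have hl' : (1 : ℝ) ≤ l := by exact_mod_cast hl
  calc (2 * (k + l) + 1 : ℝ) ^ d / l ≤ (2 * (k + l) + 1 : ℝ) ^ d :=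
        div_le_self (by positivity) hl'
    _ ≤ (3 * (k + l) : ℝ) ^ d := by gcongr; linarith
    _ ≤ 3 ^ (d + 1) * ((k : ℝ) + l) ^ d := by
        rw [mul_pow]; gcongr
        exacts [by norm_num, d.le_succ]

lemma IsSitePerc.abs_integral_Nm_mul_sub_le (hμ : IsSitePerc μ q) (hk : 1 ≤ k) (hl : 1 ≤ l) :
    |∫ ω, Nm d m k ω * Nm d m l ω ∂μ - (∫ ω, Nm d m k ω ∂μ) * (∫ ω, Nm d m l ω ∂μ)|
      ≤ 3 ^ (d + 1) * ((k : ℝ) + l) ^ d * ∫ ω, Nm d m k ω ∂μ := by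
  have := hμ.1
  have hcov := covariance_eq_sub (memLp_Nm (μ := μ) (m := m) hk) (memLp_Nm (m := m) hl)
  simp only [Pi.mul_apply] at hcov
  rw [← hcov, Nm_eq_sum_clusterWeight, Nm_eq_sum_clusterWeight]
  simp only [Finset.sum_apply]
  rw [integral_finsetSum _ fun v _ => (memLp_clusterWeight hk 1).integrable le_rfl]
  exact (hμ.abs_covariance_sum_clusterWeight_le _ hk hl).trans <|
    mul_le_mul_of_nonneg_right (two_mul_add_add_one_pow_div_le d hk hl)
      (Finset.sum_nonneg fun v _ => integral_nonneg clusterWeight_nonneg)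

end ClusterCount

end Perc

theorem stmt9_general (d : ℕ) (p : ℝ)
    (μ : Measure (Perc.Vertex d → Bool)) (hμ : Perc.IsBernoulliPerc μ p)
    (m k l : ℕ) (hk : 1 ≤ k) (hl : 1 ≤ l) :
    |∫ ω, Perc.Nm d m k ω * Perc.Nm d m l ω ∂μ
        - (∫ ω, Perc.Nm d m k ω ∂μ) * (∫ ω, Perc.Nm d m l ω ∂μ)|
      ≤ 3 ^ (d + 1) * ((k : ℝ) + l) ^ d * ∫ ω, Perc.Nm d m (max k l) ω ∂μ ∧
    ∫ ω, (Perc.Nm d m k ω) ^ 2 ∂μ - (∫ ω, Perc.Nm d m k ω ∂μ) ^ 2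
      ≤ 6 ^ (d + 1) * (k : ℝ) ^ d * ∫ ω, Perc.Nm d m k ω ∂μ := by
  refine ⟨?_, ?_⟩
  · rcases le_total l k with hlk | hkl
    · rw [max_eq_left hlk]
      exact hμ.abs_integral_Nm_mul_sub_le hk hl
    · simpa only [max_eq_right hkl, mul_comm, add_comm] using
        hμ.abs_integral_Nm_mul_sub_le (m := m) hl hk
  · have hconst : (3 : ℝ) ^ (d + 1) * ((k : ℝ) + k) ^ d ≤ 6 ^ (d + 1) * (k : ℝ) ^ d := by
      rw [← two_mul, mul_pow, show (6 : ℝ) = 3 * 2 by norm_num, mul_pow, mul_assoc]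
      gcongr
      exacts [by norm_num, d.le_succ]
    calc ∫ ω, (Perc.Nm d m k ω) ^ 2 ∂μ - (∫ ω, Perc.Nm d m k ω ∂μ) ^ 2
        ≤ |∫ ω, Perc.Nm d m k ω * Perc.Nm d m k ω ∂μ
            - (∫ ω, Perc.Nm d m k ω ∂μ) * (∫ ω, Perc.Nm d m k ω ∂μ)| := by
          simpa only [sq] using le_abs_self _
      _ ≤ 3 ^ (d + 1) * ((k : ℝ) + k) ^ d * ∫ ω, Perc.Nm d m k ω ∂μ :=
          hμ.abs_integral_Nm_mul_sub_le hk hk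
      _ ≤ 6 ^ (d + 1) * (k : ℝ) ^ d * ∫ ω, Perc.Nm d m k ω ∂μ := by
          gcongr
          exact integral_nonneg Perc.Nm_nonneg

/-- covariance and variance bounds for cluster counts. -/
theorem stmt9 (d : ℕ) (hd : 1 ≤ d) (p : ℝ) (hp : p ∈ Set.Icc (0 : ℝ) 1)
    (μ : Measure (Perc.Vertex d → Bool)) (hμ : Perc.IsBernoulliPerc μ p)
    (m k l : ℕ) (hk : 1 ≤ k) (hl : 1 ≤ l) :
    |∫ ω, Perc.Nm d m k ω * Perc.Nm d m l ω ∂μ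
        - (∫ ω, Perc.Nm d m k ω ∂μ) * (∫ ω, Perc.Nm d m l ω ∂μ)|
      ≤ 3 ^ (d + 1) * ((k : ℝ) + l) ^ d * ∫ ω, Perc.Nm d m (max k l) ω ∂μ ∧
    ∫ ω, (Perc.Nm d m k ω) ^ 2 ∂μ - (∫ ω, Perc.Nm d m k ω ∂μ) ^ 2
      ≤ 6 ^ (d + 1) * (k : ℝ) ^ d * ∫ ω, Perc.Nm d m k ω ∂μ :=
  stmt9_general d p μ hμ m k l hk hl
end
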